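/- arXiv:1911.06585 — 6 statements merged into one kernel-verified Lean document; each statement's English description precedes it below -/
import Mathlib

section
/- Every d-complete monoid is naturally ordered, i.e. for every d-complete monoid (K,⊕,0,Σ), the relation ⪯ on K defined by k₁ ⪯ k₂ iff there exists k ∈ K with k₁ ⊕ k = k₂ is antisymmetric and hence a partial order. -/
/-- An infinitary sum operation on a commutative monoid `K`, turning it into a complete
monoid: the sum of the empty family is `0`, the sum of a singleton family is its member,
the sum of a two-element family is the binary sum, and the partition law holds (every
partition of a countable index set `I` into sets indexed by `J` is given by the fibers
of a map `g : I → J`). -/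
structure InfSum (K : Type) [AddCommMonoid K] where
  isum : ∀ {I : Type} [Countable I], (I → K) → K
  isum_empty : ∀ {I : Type} [Countable I] (f : I → K), IsEmpty I → isum f = 0
  isum_single : ∀ {I : Type} [Countable I] (f : I → K) (j : I), (∀ i, i = j) → isum f = f j
  isum_pair : ∀ {I : Type} [Countable I] (f : I → K) (j j' : I), j ≠ j' →
    (∀ i, i = j ∨ i = j') → isum f = f j + f j'
  isum_partition : ∀ {I J : Type} [Countable I] [Countable J] (f : I → K) (g : I → J),
    isum f = isum fun j : J => isum fun i : {i : I // g i = j} => f i.1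

section MMonoid

variable {K : Type} [AddCommMonoid K]

/-- A complete monoid is d-complete if, whenever all the partial sums `Σ_{i ≤ n} f i`
eventually equal `k`, the infinitary sum of the family equals `k`. -/
def InfSum.DComplete (S : InfSum K) : Prop :=
  ∀ (k : K) (f : ℕ → K),
    (∃ n₀ : ℕ, ∀ n, n₀ ≤ n → (∑ i ∈ Finset.range (n + 1), f i) = k) → S.isum f = k

/-- A complete monoid is completely idempotent if the infinitary sum of every constant
family over a nonempty countable index set is that constant. -/
def InfSum.CompletelyIdempotent (S : InfSum K) : Prop :=
  ∀ (I : Type) [Countable I], Nonempty I → ∀ k : K, S.isum (fun _ : I => k) = k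

/-- The family `Ω` of operation sets contains all the null (constantly `0`) operations. -/
def HasZeroOps (Ω : ∀ n : ℕ, Set ((Fin n → K) → K)) : Prop :=
  ∀ n : ℕ, (fun _ : Fin n → K => (0 : K)) ∈ Ω n

/-- Distributivity of an M-monoid: every operation in `Ω` distributes over `+` in each
argument, and `0` is absorbing for every operation in `Ω`. -/
def DistributiveOps (Ω : ∀ n : ℕ, Set ((Fin n → K) → K)) : Prop :=
  ∀ n : ℕ, ∀ ω ∈ Ω n,
    (∀ (x : Fin n → K) (i : Fin n) (a b : K),
      ω (Function.update x i (a + b)) = ω (Function.update x i a) + ω (Function.update x i b)) ∧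
    (∀ x : Fin n → K, (∃ i, x i = 0) → ω x = 0)

end MMonoid

/-- Every d-complete monoid is naturally ordered: the relation
`k₁ ⪯ k₂ ↔ ∃ k, k₁ + k = k₂` is a partial order. -/
theorem dComplete_naturallyOrdered {K : Type} [AddCommMonoid K]
    (S : InfSum K) (hS : S.DComplete) :
    IsPartialOrder K fun k₁ k₂ => ∃ k, k₁ + k = k₂ := by
  have hanti : ∀ k₁ k₂ : K, (∃ k, k₁ + k = k₂) → (∃ k, k₂ + k = k₁) → k₁ = k₂ := ?_
  · exact { refl := fun k => ⟨0, add_zero k⟩,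
            trans := fun x y z ⟨u, hu⟩ ⟨v, hv⟩ => ⟨u + v, by rw [← add_assoc, hu, hv]⟩,
            antisymm := hanti }
  intro k₁ k₂ ⟨a, ha⟩ ⟨b, hb⟩
  have hk1 : k₁ + (a + b) = k₁ := by rw [← add_assoc, ha, hb]
  have hk2 : k₂ + (b + a) = k₂ := by rw [← add_assoc, hb, ha]
  set f : ℕ → K := fun i => if i = 0 then k₁ else if i % 2 = 1 then a else b with hf
  have hf0 : f 0 = k₁ := by simp [hf]
  have hfodd : ∀ i, i % 2 = 1 → f i = a := by
    intro i hi
    have h0 : i ≠ 0 := by omega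
    simp [hf, h0, hi]
  have hfeven : ∀ i, i ≠ 0 → i % 2 = 0 → f i = b := by
    intro i h0 hi
    have h1 : ¬ (i % 2 = 1) := by omega
    simp [hf, h0, h1]
  -- Grouping 1: fibers of g₁ i = (i+1)/2 : {0}, {1,2}, {3,4}, ...
  have hP1 := S.isum_partition f (fun i => (i + 1) / 2)
  -- Grouping 2: fibers of g₂ i = i/2 : {0,1}, {2,3}, ...
  have hP2 := S.isum_partition f (fun i => i / 2)
  set G : ℕ → K := fun j : ℕ => S.isum fun i : {i : ℕ // (i + 1) / 2 = j} => f i.1 with hG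
  set F : ℕ → K := fun j : ℕ => S.isum fun i : {i : ℕ // i / 2 = j} => f i.1 with hF
  have hG0 : G 0 = k₁ := by
    have h := S.isum_single (fun i : {i : ℕ // (i + 1) / 2 = 0} => f i.1)
      ⟨0, by omega⟩ ?_
    · exact h.trans hf0
    · intro i
      apply Subtype.ext
      have h2 := i.2
      simp only at h2 ⊢
      omega
  have hGj : ∀ j : ℕ, j ≠ 0 → G j = a + b := by
    intro j hj
    have hne : (⟨2 * j - 1, by omega⟩ : {i : ℕ // (i + 1) / 2 = j}) ≠ ⟨2 * j, by omega⟩ := by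
      intro h
      have := congrArg Subtype.val h
      simp at this; omega
    have := S.isum_pair (fun i : {i : ℕ // (i + 1) / 2 = j} => f i.1)
      ⟨2 * j - 1, by omega⟩ ⟨2 * j, by omega⟩ hne
      (fun i => by
        have := i.2
        rcases (by omega : i.1 = 2 * j - 1 ∨ i.1 = 2 * j) with h | h
        · exact Or.inl (Subtype.ext h)
        · exact Or.inr (Subtype.ext h))
    have key : f (2 * j - 1) + f (2 * j) = a + b := by
      rw [hfodd _ (by omega), hfeven _ (by omega) (by omega)]
    exact this.trans key
  have hF0 : F 0 = k₂ := by
    have hne : (⟨0, by omega⟩ : {i : ℕ // i / 2 = 0}) ≠ ⟨1, by omega⟩ := by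
      intro h
      have := congrArg Subtype.val h
      simp at this
    have := S.isum_pair (fun i : {i : ℕ // i / 2 = 0} => f i.1)
      ⟨0, by omega⟩ ⟨1, by omega⟩ hne
      (fun i => by
        have := i.2
        rcases (by omega : i.1 = 0 ∨ i.1 = 1) with h | h
        · exact Or.inl (Subtype.ext h)
        · exact Or.inr (Subtype.ext h))
    have key : f 0 + f 1 = k₂ := by
      rw [hf0, hfodd 1 (by omega), ha]
    exact this.trans key
  have hFj : ∀ j : ℕ, j ≠ 0 → F j = b + a := by
    intro j hj
    have hne : (⟨2 * j, by omega⟩ : {i : ℕ // i / 2 = j}) ≠ ⟨2 * j + 1, by omega⟩ := by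
      intro h
      have := congrArg Subtype.val h
      simp at this
    have := S.isum_pair (fun i : {i : ℕ // i / 2 = j} => f i.1)
      ⟨2 * j, by omega⟩ ⟨2 * j + 1, by omega⟩ hne
      (fun i => by
        have := i.2
        rcases (by omega : i.1 = 2 * j ∨ i.1 = 2 * j + 1) with h | h
        · exact Or.inl (Subtype.ext h)
        · exact Or.inr (Subtype.ext h))
    have key : f (2 * j) + f (2 * j + 1) = b + a := by
      rw [hfeven _ (by omega) (by omega), hfodd _ (by omega)]
    exact this.trans key
  -- partial sums of G are all k₁
  have hGsum : ∀ n : ℕ, (∑ i ∈ Finset.range (n + 1), G i) = k₁ := by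
    intro n
    induction n with
    | zero => simpa using hG0
    | succ m ih =>
      rw [Finset.sum_range_succ, ih, hGj (m + 1) (by omega), hk1]
  have hFsum : ∀ n : ℕ, (∑ i ∈ Finset.range (n + 1), F i) = k₂ := by
    intro n
    induction n with
    | zero => simpa using hF0
    | succ m ih =>
      rw [Finset.sum_range_succ, ih, hFj (m + 1) (by omega), hk2]
  have h1 : S.isum f = k₁ := by
    rw [hP1]
    exact hS k₁ G ⟨0, fun n _ => hGsum n⟩
  have h2 : S.isum f = k₂ := by
    rw [hP2]
    exact hS k₂ F ⟨0, fun n _ => hFsum n⟩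
  rw [← h1, h2]
end

section
/- Every completely idempotent monoid is d-complete: if (K,⊕,0,Σ) is a complete monoid such that Σ_{i∈I} k = k for every k ∈ K and every nonempty countable index set I, then K is d-complete. -/
section Aux

variable {K : Type} [AddCommMonoid K] (S : InfSum K)

lemma InfSum.isum_equiv {I J : Type} [Countable I] [Countable J] (e : I ≃ J) (f : J → K) :
    S.isum (f ∘ e) = S.isum f := by
  rw [S.isum_partition (f ∘ e) e]
  have h : ∀ j : J, (S.isum fun i : {i : I // e i = j} => (f ∘ e) i.1) = f j := by
    intro j
    rw [S.isum_single _ (⟨e.symm j, e.apply_symm_apply j⟩ : {i : I // e i = j})]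
    · simp
    · rintro ⟨i, hi⟩
      exact Subtype.ext (e.injective (by simp [hi]))
  simp only [h]

lemma InfSum.isum_bool_split {I : Type} [Countable I] (f : I → K) (g : I → Bool) :
    S.isum f = S.isum (fun i : {i : I // g i = true} => f i.1)
      + S.isum (fun i : {i : I // g i = false} => f i.1) := by
  rw [S.isum_partition f g]
  exact S.isum_pair _ true false (by simp) (fun b => by cases b <;> simp)

lemma InfSum.isum_fin : ∀ (n : ℕ) (f : Fin n → K), S.isum f = ∑ i, f i := by
  intro n
  induction n with
  | zero =>
    intro f
    rw [S.isum_empty f inferInstance]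
    simp
  | succ n ih =>
    intro f
    rw [S.isum_bool_split f (fun i => decide (i.1 < n))]
    let e : Fin n ≃ {i : Fin (n + 1) // decide (i.1 < n) = true} :=
      { toFun := fun i => ⟨i.castSucc, by simp [i.isLt]⟩
        invFun := fun s => ⟨s.1.1, by
          have := s.2; simpa using this⟩
        left_inv := fun i => rfl
        right_inv := fun s => Subtype.ext (Fin.ext rfl) }
    have h1 : S.isum (fun i : {i : Fin (n + 1) // decide (i.1 < n) = true} => f i.1)
        = ∑ i : Fin n, f i.castSucc := by
      rw [← S.isum_equiv e, ih]
      exact Finset.sum_congr rfl fun i _ => rfl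
    have h2 : S.isum (fun i : {i : Fin (n + 1) // decide (i.1 < n) = false} => f i.1)
        = f (Fin.last n) := by
      rw [S.isum_single _ (⟨Fin.last n, by simp⟩ : {i : Fin (n + 1) // decide (i.1 < n) = false})]
      rintro ⟨i, hi⟩
      have h' : ¬ i.1 < n := by simpa using hi
      have hin : i.1 = n := by have := i.isLt; omega
      exact Subtype.ext (Fin.ext (by simp [Fin.val_last, hin]))
    rw [h1, h2, Fin.sum_univ_castSucc]

end Aux

/-- Every completely idempotent monoid is d-complete. -/
theorem completelyIdempotent_dComplete {K : Type} [AddCommMonoid K]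
    (S : InfSum K) (hS : S.CompletelyIdempotent) : S.DComplete := by
  rintro k f ⟨n₀, hn₀⟩
  set I := {p : ℕ × ℕ // p.1 ≤ n₀ + p.2} with hI
  set F : I → K := fun p => f p.1.1 with hF
  -- partition by second coordinate: each fiber sums to k
  have hA : S.isum F = k := by
    rw [S.isum_partition F (fun p => p.1.2)]
    have h : ∀ j : ℕ, (S.isum fun p : {p : I // p.1.2 = j} => F p.1) = k := by
      intro j
      let e : Fin (n₀ + j + 1) ≃ {p : I // p.1.2 = j} :=
        { toFun := fun i => ⟨⟨(i.1, j), by omega⟩, rfl⟩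
          invFun := fun s => ⟨s.1.1.1, by
            have h1 := s.1.2
            have h2 := s.2
            omega⟩
          left_inv := fun i => rfl
          right_inv := fun s => by
            apply Subtype.ext; apply Subtype.ext
            have h2 := s.2
            exact Prod.ext rfl h2.symm }
      rw [← S.isum_equiv e]
      have : ((fun p : {p : I // p.1.2 = j} => F p.1) ∘ e) = fun i : Fin (n₀ + j + 1) => f i.1 := by
        funext i
        rfl
      rw [this, S.isum_fin, Fin.sum_univ_eq_sum_range]
      exact hn₀ (n₀ + j) (by omega)
    simp only [h]
    exact hS ℕ ⟨0⟩ k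
  -- partition by first coordinate: each fiber sums to f i
  have hB : S.isum F = S.isum f := by
    rw [S.isum_partition F (fun p => p.1.1)]
    have h : ∀ i : ℕ, (S.isum fun p : {p : I // p.1.1 = i} => F p.1) = f i := by
      intro i
      have hc : (fun p : {p : I // p.1.1 = i} => F p.1) = fun _ => f i := by
        funext p
        have := p.2
        simp only [hF]
        rw [this]
      rw [hc]
      exact hS _ ⟨⟨⟨(i, i), by omega⟩, rfl⟩⟩ (f i)
    simp only [h]
  rw [← hB, hA]
end

section
/- For every c ∈ ℕ there exists n ∈ ℕ such that every tree d ∈ T_R^{(c)} has height(d) < n; consequently, the set T_R^{(c)} of trees that are c'-cyclic for some c' ≤ c is finite. -/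
open scoped Classical

/-- Trees over a ranked set `R` with arity function `ar`:
`RT.node r ts` is a tree whose root is labelled `r` and which has `ar r` children. -/
inductive RT (R : Type) (ar : R → ℕ) : Type
  | node (r : R) (children : Fin (ar r) → RT R ar)

namespace RT

variable {R : Type} {ar : R → ℕ}

/-- The rule labelling the root of a tree. -/
def rootRule : RT R ar → R
  | node r _ => r

/-- The subtree at a position (`none` if the position is not a position of the tree). -/
def subAt : RT R ar → List ℕ → Option (RT R ar)
  | t, [] => some t
  | node r ts, i :: p => if h : i < ar r then subAt (ts ⟨i, h⟩) p else none

/-- Replace the subtree at a position by another tree. -/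
def replaceAt : RT R ar → List ℕ → RT R ar → RT R ar
  | _, [], s => s
  | node r ts, i :: p, s => node r fun j => if j.1 = i then replaceAt (ts j) p s else ts j

/-- The sequence of rule labels from the root to a position, inclusive. -/
def seqTo : RT R ar → List ℕ → Option (List R)
  | node r _, [] => some [r]
  | node r ts, i :: p => if h : i < ar r then (seqTo (ts ⟨i, h⟩) p).map (fun l => r :: l) else none

/-- `p` is a leaf position of `d`, i.e. a valid position with no child positions. -/
def LeafAt (d : RT R ar) (p : List ℕ) : Prop :=
  ∃ t, subAt d p = some t ∧ ar t.rootRule = 0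

/-- The height of a tree: `0` on nullary nodes, otherwise `1` plus the maximum height
of the direct subtrees. -/
def height : RT R ar → ℕ
  | node _ ts => Finset.univ.sup fun i => height (ts i) + 1

end RT

/-- The weight of a tree: evaluate it bottom-up, interpreting each rule `r` by the
operation `wt r`. -/
def wtval {K R : Type} {ar : R → ℕ} (wt : ∀ r : R, (Fin (ar r) → K) → K) : RT R ar → K
  | .node r ts => wt r fun i => wtval wt (ts i)

section Cyclicity

variable {R : Type} {ar : R → ℕ}

/-- A string over `R` is an elementary cycle if it has length `> 1`, its first and last
symbols coincide, and it becomes repetition-free after deleting its last (resp. first)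
symbol. -/
def ElementaryCycle (w : List R) : Prop :=
  1 < w.length ∧ w.head? = w.getLast? ∧ w.dropLast.Nodup ∧ w.tail.Nodup

/-- `ρ` is `(c,w)`-cyclic: `ρ = v₀ w v₁ ⋯ w v_c` (with `c` occurrences of the elementary
cycle `w`) where `w` is not an infix of any `vᵢ`. -/
def CWCyclic (c : ℕ) (w ρ : List R) : Prop :=
  ElementaryCycle w ∧
  ∃ v : ℕ → List R,
    ρ = v 0 ++ (((List.range c).map fun i => w ++ v (i + 1)).flatten) ∧
    ∀ i ≤ c, ¬ w <:+: v i

/-- `ρ` is `c`-cyclic: it is `(c,w)`-cyclic for some elementary cycle `w` and not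
`(c',w')`-cyclic for any `c' > c` and elementary cycle `w'`. -/
def CCyclic (c : ℕ) (ρ : List R) : Prop :=
  (∃ w, CWCyclic c w ρ) ∧ ∀ c', c < c' → ∀ w', ¬ CWCyclic c' w' ρ

/-- The leaf position `p` of `d` is `(c,w)`-cyclic. -/
def LeafCW (c : ℕ) (w : List R) (d : RT R ar) (p : List ℕ) : Prop :=
  RT.LeafAt d p ∧ ∃ ρ, RT.seqTo d p = some ρ ∧ CWCyclic c w ρ

/-- The leaf position `p` of `d` is `c`-cyclic. -/
def LeafC (c : ℕ) (d : RT R ar) (p : List ℕ) : Prop :=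
  RT.LeafAt d p ∧ ∃ ρ, RT.seqTo d p = some ρ ∧ CCyclic c ρ

/-- The tree `d` is `c`-cyclic: some leaf of `d` is `c`-cyclic and no leaf of `d` is
`c'`-cyclic for any `c' > c`. -/
def TreeC (c : ℕ) (d : RT R ar) : Prop :=
  (∃ p, LeafC c d p) ∧ ∀ c', c < c' → ∀ p, ¬ LeafC c' d p

/-- `d ⊢_w d'` : there are positions `p ≤ p'` of `d` whose connecting label sequence is
`w`, and `d'` is obtained by replacing the subtree at `p` by the subtree at `p'`.
(The position `p'` is `p ++ q`.) -/
def CutW (w : List R) (d d' : RT R ar) : Prop :=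
  ∃ p q t s, RT.subAt d p = some t ∧ RT.subAt t q = some s ∧
    RT.seqTo t q = some w ∧ d' = RT.replaceAt d p s

/-- `d ⊢ d'` : `d ⊢_w d'` for some elementary cycle `w`. -/
def Cut (d d' : RT R ar) : Prop := ∃ w, ElementaryCycle w ∧ CutW w d d'

/-- The set of `w`-cutout trees of `d`. -/
def cotreesW (w : List R) (d : RT R ar) : Set (RT R ar) := {d' | Relation.TransGen (CutW w) d d'}

/-- The set of cutout trees of `d`. -/
def cotrees (d : RT R ar) : Set (RT R ar) := {d' | Relation.TransGen Cut d d'}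

end Cyclicity

section Rules

variable {N R : Type}

/-- Well-sorted trees over a rule system given by `lhs` and `rhs`: at each node labelled
`r`, the `i`-th child is a well-sorted tree whose root label has left-hand side equal to
the `i`-th nonterminal of `rhs r`. -/
inductive WellSorted (lhs : R → N) (rhs : R → List N) :
    RT R (fun r => (rhs r).length) → Prop
  | node (r : R) (ts : Fin (rhs r).length → RT R fun r => (rhs r).length)
      (hsort : ∀ i, lhs (ts i).rootRule = (rhs r).get i)
      (hrec : ∀ i, WellSorted lhs rhs (ts i)) : WellSorted lhs rhs (RT.node r ts)

/-- `T_R` : the set of (well-sorted) trees over the rule system. -/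
def TRset (lhs : R → N) (rhs : R → List N) : Set (RT R fun r => (rhs r).length) :=
  {d | WellSorted lhs rhs d}

/-- `(T_R)_A` : the set of trees of sort `A`. -/
def TRA (lhs : R → N) (rhs : R → List N) (A : N) : Set (RT R fun r => (rhs r).length) :=
  {d | WellSorted lhs rhs d ∧ lhs d.rootRule = A}

/-- `T_R^{(c)}` : the set of trees that are `c'`-cyclic for some `c' ≤ c`. -/
def TRcset (lhs : R → N) (rhs : R → List N) (c : ℕ) : Set (RT R fun r => (rhs r).length) :=
  {d | WellSorted lhs rhs d ∧ ∃ c' ≤ c, TreeC c' d}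

end Rules

/-! On the path to a deepest leaf, every block of `card R + 1` consecutive rules repeats a rule
and therefore contains an elementary cycle. There are only finitely many elementary cycles, say
`E`, so a path longer than `(E * c + 1) * (card R + 1)` contains `c + 1` disjoint copies of a
single elementary cycle `w`; cutting greedily at leftmost occurrences of `w` turns them into a
`(k, w)`-decomposition with `k > c`. That leaf is then `c'`-cyclic for some `c' > c`, which no
tree of `T_R^{(c)}` allows. So heights are bounded, and over finitely many rules there are only
finitely many trees of bounded height. -/

section Lists

variable {R : Type}

theorem ElementaryCycle.length_le [Fintype R] {w : List R} (hw : ElementaryCycle w) :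
    w.length ≤ Fintype.card R + 1 := by
  have := hw.2.2.1.length_le_card
  rw [List.length_dropLast] at this
  omega

theorem elementaryCycle_of_not_nodup {a z : R} {m : List R}
    (hl : ¬ (a :: (m ++ [z])).Nodup) (hd : (a :: m).Nodup) (ht : (m ++ [z]).Nodup) :
    ElementaryCycle (a :: (m ++ [z])) := by
  have haz : a = z := by
    have ha : a ∈ m ++ [z] := by
      by_contra ha
      exact hl (List.nodup_cons.2 ⟨ha, ht⟩)
    rcases List.mem_append.1 ha with ha | ha
    · exact absurd ha (List.nodup_cons.1 hd).1
    · simpa using ha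
  subst haz
  refine ⟨by simp, ?_, ?_, ?_⟩
  · rw [← List.cons_append, List.getLast?_concat]; rfl
  · rwa [← List.cons_append, List.dropLast_concat]
  · exact ht

/-- A shortest repetition `y ⋯ y` inside a list is an elementary cycle. -/
theorem exists_elementaryCycle_infix_of_not_nodup {l : List R} (hl : ¬ l.Nodup) :
    ∃ w, ElementaryCycle w ∧ w <:+: l := by
  induction hn : l.length using Nat.strong_induction_on generalizing l with
  | _ n ih =>
  match l, hl with
  | [], hl => exact absurd List.nodup_nil hl
  | [a], hl => exact absurd (List.nodup_singleton a) hl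
  | a :: b :: t, hl =>
    obtain ⟨m, z, hmz⟩ : ∃ m z, b :: t = m ++ [z] :=
      ⟨_, _, (List.dropLast_append_getLast (List.cons_ne_nil b t)).symm⟩
    rw [hmz] at hl hn ⊢
    by_cases hd : (a :: m).Nodup
    · by_cases ht : (m ++ [z]).Nodup
      · exact ⟨_, elementaryCycle_of_not_nodup hl hd ht, List.infix_refl _⟩
      · obtain ⟨w, hw, hinf⟩ := ih _ (by simp [← hn]) ht rfl
        exact ⟨w, hw, hinf.trans (List.suffix_cons a _).isInfix⟩
    · obtain ⟨w, hw, hinf⟩ := ih _ (by simp [← hn]) hd rfl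
      exact ⟨w, hw, hinf.trans ⟨[], [z], by simp⟩⟩

def DisjointOccurrences (w : List R) : ℕ → List R → Prop
  | 0, _ => True
  | k + 1, ρ => ∃ s t, ρ = s ++ w ++ t ∧ DisjointOccurrences w k t

theorem DisjointOccurrences.append_left {w t : List R} {k : ℕ} (x : List R)
    (h : DisjointOccurrences w k t) : DisjointOccurrences w k (x ++ t) := by
  cases k with
  | zero => trivial
  | succ k =>
    obtain ⟨s, t', rfl, h⟩ := h
    exact ⟨x ++ s, t', by simp, h⟩

theorem DisjointOccurrences.of_suffix {w t b : List R} {k : ℕ}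
    (h : DisjointOccurrences w k t) (htb : t <:+ b) : DisjointOccurrences w k b := by
  obtain ⟨x, rfl⟩ := htb
  exact h.append_left x

theorem exists_leftmost_infix {w : List R} (hw : w ≠ []) (s t : List R) :
    ∃ a b, s ++ w ++ t = a ++ w ++ b ∧ ¬ w <:+: a ∧ t <:+ b := by
  induction hn : s.length using Nat.strong_induction_on generalizing s t with
  | _ n ih =>
  by_cases h : w <:+: s
  · obtain ⟨s₁, s₂, rfl⟩ := h
    have hlt : s₁.length < n := by simp [← hn, List.length_pos_iff.2 hw]
    obtain ⟨a, b, heq, ha, hb⟩ := ih _ hlt s₁ (s₂ ++ w ++ t) rfl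
    exact ⟨a, b, by simp [← heq], ha, (List.suffix_append _ t).trans hb⟩
  · exact ⟨s, t, rfl, h, List.suffix_refl t⟩

theorem cwCyclic_zero {w ρ : List R} (hw : ElementaryCycle w) (h : ¬ w <:+: ρ) :
    CWCyclic 0 w ρ :=
  ⟨hw, fun _ => ρ, by simp, fun _ _ => h⟩

theorem CWCyclic.append_infix {c : ℕ} {w a b : List R} (h : CWCyclic c w b)
    (ha : ¬ w <:+: a) : CWCyclic (c + 1) w (a ++ w ++ b) := by
  obtain ⟨hw, v, rfl, hv⟩ := h
  refine ⟨hw, fun | 0 => a | i + 1 => v i, ?_, ?_⟩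
  · simp [List.range_succ_eq_map, Function.comp_def]
  · rintro (_ | i) hi
    exacts [ha, hv i (by omega)]

theorem CWCyclic.le_length {c : ℕ} {w ρ : List R} (h : CWCyclic c w ρ) : c ≤ ρ.length := by
  obtain ⟨hw, v, rfl, -⟩ := h
  have hw₁ : 1 ≤ w.length := by have := hw.1; omega
  rw [List.length_append, List.length_flatten]
  have := List.length_le_sum_of_one_le
    (((List.range c).map fun i => w ++ v (i + 1)).map List.length) (by simp; omega)
  rw [List.length_map, List.length_map, List.length_range] at this
  omega

/-- Greedily taking leftmost occurrences of `w` finds at least as many as any disjoint family. -/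
theorem exists_cwCyclic_of_disjointOccurrences {w : List R} (hw : ElementaryCycle w) {k : ℕ}
    {ρ : List R} (hk : DisjointOccurrences w k ρ) : ∃ c, k ≤ c ∧ CWCyclic c w ρ := by
  have hw₂ : 2 ≤ w.length := hw.1
  have hw₀ : w ≠ [] := List.ne_nil_of_length_pos (by omega)
  induction hn : ρ.length using Nat.strong_induction_on generalizing k ρ with
  | _ n ih =>
  by_cases h : w <:+: ρ
  · obtain ⟨s, t, hρ, ht⟩ : ∃ s t, ρ = s ++ w ++ t ∧ DisjointOccurrences w (k - 1) t := by
      cases k with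
      | zero =>
        obtain ⟨s, t, h⟩ := h
        exact ⟨s, t, h.symm, trivial⟩
      | succ k => exact hk
    obtain ⟨a, b, heq, ha, htb⟩ := exists_leftmost_infix hw₀ s t
    have hlt : b.length < n := by
      simp [← hn, hρ, heq]; omega
    obtain ⟨c, hc, hb⟩ := ih _ hlt (ht.of_suffix htb) rfl
    exact ⟨c + 1, by omega, hρ ▸ heq ▸ hb.append_infix ha⟩
  · cases k with
    | zero => exact ⟨0, le_rfl, cwCyclic_zero hw h⟩
    | succ k =>
      obtain ⟨s, t, rfl, -⟩ := hk
      exact absurd ⟨s, t, rfl⟩ h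

theorem exists_cCyclic_of_cwCyclic {k : ℕ} {w ρ : List R} (h : CWCyclic k w ρ) :
    ∃ c, k ≤ c ∧ CCyclic c ρ := by
  let P c := ∃ w, CWCyclic c w ρ
  have hP : P k := ⟨w, h⟩
  refine ⟨Nat.findGreatest P ρ.length, Nat.le_findGreatest h.le_length hP,
    Nat.findGreatest_spec h.le_length hP, fun c' hc' w' h' => ?_⟩
  exact Nat.findGreatest_is_greatest hc' h'.le_length ⟨w', h'⟩

/-- Each block of `card R + 1` consecutive letters repeats a letter, hence contains an
elementary cycle; the blocks are disjoint. -/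
theorem exists_elementaryCycles_disjointOccurrences [Fintype R] (K : ℕ) {ρ : List R}
    (hρ : K * (Fintype.card R + 1) ≤ ρ.length) :
    ∃ F : Multiset (List R), Multiset.card F = K ∧ (∀ w ∈ F, ElementaryCycle w) ∧
      ∀ w, DisjointOccurrences w (F.count w) ρ := by
  induction K generalizing ρ with
  | zero => exact ⟨0, rfl, by simp, fun _ => trivial⟩
  | succ K ih =>
    set m := Fintype.card R
    rw [add_one_mul] at hρ
    have hblock : ¬ (ρ.take (m + 1)).Nodup := fun h => by
      have := h.length_le_card
      rw [List.length_take] at this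
      omega
    obtain ⟨w₀, hw₀, a, b, hab⟩ := exists_elementaryCycle_infix_of_not_nodup hblock
    obtain ⟨F, hcard, hF, hocc⟩ := ih (ρ := ρ.drop (m + 1)) (by rw [List.length_drop]; omega)
    have hsplit : ρ = ρ.take (m + 1) ++ ρ.drop (m + 1) := (List.take_append_drop _ _).symm
    refine ⟨w₀ ::ₘ F, by simp [hcard], ?_, fun w => ?_⟩
    · rintro w hw
      rcases Multiset.mem_cons.1 hw with rfl | hw
      exacts [hw₀, hF w hw]
    · by_cases hw : w = w₀
      · subst hw
        rw [Multiset.count_cons_self]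
        exact ⟨a, b ++ ρ.drop (m + 1), by rw [← List.append_assoc, hab, List.take_append_drop], (hocc w).append_left b⟩
      · rw [Multiset.count_cons_of_ne hw, hsplit]
        exact (hocc w).append_left _

theorem Multiset.exists_lt_count_of_card_mul_lt {α : Type*} [DecidableEq α] {F : Multiset α}
    {S : Finset α} {n : ℕ} (hF : ∀ a ∈ F, a ∈ S) (h : S.card * n < Multiset.card F) :
    ∃ a ∈ S, n < F.count a := by
  rw [← Multiset.sum_count_eq_card hF] at h
  exact Finset.exists_lt_of_sum_lt (by simpa [mul_comm] using h)

theorem exists_cwCyclic_of_length_ge [Fintype R] (c : ℕ) :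
    ∃ n, ∀ ρ : List R, n ≤ ρ.length → ∃ k w, c < k ∧ CWCyclic k w ρ := by
  set m := Fintype.card R
  let S := (List.finite_length_le R (m + 1)).toFinset
  refine ⟨(S.card * c + 1) * (m + 1), fun ρ hρ => ?_⟩
  obtain ⟨F, hcard, hF, hocc⟩ := exists_elementaryCycles_disjointOccurrences _ hρ
  obtain ⟨w, -, hw⟩ := Multiset.exists_lt_count_of_card_mul_lt (S := S) (n := c)
    (fun w hw => by simpa [S] using (hF w hw).length_le) (by omega)
  obtain ⟨k, hk, hkw⟩ :=
    exists_cwCyclic_of_disjointOccurrences (hF w (Multiset.count_pos.1 (by omega))) (hocc w)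
  exact ⟨k, w, by omega, hkw⟩

end Lists

namespace RT

variable {R : Type} {ar : R → ℕ}

theorem exists_leafAt_seqTo_length_eq (d : RT R ar) :
    ∃ p ρ, d.LeafAt p ∧ d.seqTo p = some ρ ∧ ρ.length = d.height + 1 := by
  induction d with
  | node r ts ih =>
    rcases (Finset.univ : Finset (Fin (ar r))).eq_empty_or_nonempty with h | h
    · have h0 : ar r = 0 :=
        Nat.eq_zero_of_not_pos fun hpos => (Finset.univ_eq_empty_iff.1 h).false ⟨0, hpos⟩
      exact ⟨[], [r], ⟨_, rfl, h0⟩, rfl, by simp [height, h]⟩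
    · obtain ⟨i, -, hi⟩ := Finset.exists_mem_eq_sup _ h fun i => (ts i).height + 1
      obtain ⟨p, ρ, ⟨t, hsub, hleaf⟩, hseq, hlen⟩ := ih i
      refine ⟨i :: p, r :: ρ, ⟨t, by simpa [subAt] using hsub, hleaf⟩, ?_, ?_⟩
      · simp [seqTo, hseq]
      · simp [height, hi, hlen]

theorem finite_setOf_height_lt [Finite R] (n : ℕ) : {d : RT R ar | d.height < n}.Finite := by
  induction n with
  | zero => simp
  | succ n ih =>
    have : Finite {d : RT R ar // d.height < n} := ih.to_subtype
    refine (Set.finite_range fun s : Σ r, Fin (ar r) → {d : RT R ar // d.height < n} =>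
      node s.1 fun i => (s.2 i).1).subset ?_
    rintro ⟨r, ts⟩ hd
    have hts (i) : (ts i).height < n := Nat.lt_of_succ_lt_succ <|
      (Finset.le_sup (f := fun i => (ts i).height + 1) (Finset.mem_univ i)).trans_lt hd
    exact ⟨⟨r, fun i => ⟨ts i, hts i⟩⟩, rfl⟩

end RT

theorem TRc_bounded_height_and_finite_general {N R : Type} [Fintype R]
    (lhs : R → N) (rhs : R → List N) (c : ℕ) :
    (∃ n : ℕ, ∀ d ∈ TRcset lhs rhs c, RT.height d < n) ∧ (TRcset lhs rhs c).Finite := by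
  obtain ⟨n, hn⟩ := exists_cwCyclic_of_length_ge (R := R) c
  have hbound : ∀ d ∈ TRcset lhs rhs c, RT.height d < n := by
    rintro d ⟨-, c', hc', -, hmax⟩
    obtain ⟨p, ρ, hleaf, hseq, hlen⟩ := d.exists_leafAt_seqTo_length_eq
    by_contra! hge
    obtain ⟨k, w, hck, hkw⟩ := hn ρ (by omega)
    obtain ⟨c'', hkc'', hρ⟩ := exists_cCyclic_of_cwCyclic hkw
    exact hmax c'' (by omega) p ⟨hleaf, ρ, hseq, hρ⟩
  exact ⟨⟨n, hbound⟩, (RT.finite_setOf_height_lt n).subset hbound⟩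

/-- For every `c` there is a uniform bound on the heights of the trees in `T_R^{(c)}`;
consequently `T_R^{(c)}` is finite. -/
theorem TRc_bounded_height_and_finite {N R : Type} [Fintype N] [Nonempty N] [Fintype R]
    (lhs : R → N) (rhs : R → List N) (c : ℕ) :
    (∃ n : ℕ, ∀ d ∈ TRcset lhs rhs c, RT.height d < n) ∧ (TRcset lhs rhs c).Finite :=
  TRc_bounded_height_and_finite_general lhs rhs c
end

section
/- For every d, d' ∈ T_R the following holds: if d ⊢⁺ d', then cotrees(d') is a proper subset of cotrees(d). -/
open scoped Classical

section SizeAux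

variable {R : Type} {ar : R → ℕ}

/-- The number of nodes of a tree. -/
def RT.size : RT R ar → ℕ
  | .node _ ts => 1 + ∑ i, RT.size (ts i)

lemma RT.size_subAt_le : ∀ (d : RT R ar) (q : List ℕ) (s : RT R ar),
    RT.subAt d q = some s → s.size ≤ d.size
  | d, [], s => by simp [RT.subAt]; rintro rfl; rfl
  | .node r ts, i :: p, s => by
    simp only [RT.subAt]
    split
    · rename_i h
      intro hs
      have := RT.size_subAt_le (ts ⟨i, h⟩) p s hs
      calc s.size ≤ (ts ⟨i, h⟩).size := this
        _ ≤ ∑ j, (ts j).size :=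
          Finset.single_le_sum (f := fun j => (ts j).size) (fun j _ => Nat.zero_le _)
            (Finset.mem_univ _)
        _ ≤ (RT.node r ts).size := by rw [RT.size]; omega
    · intro hs; exact absurd hs (by simp)

lemma RT.size_subAt_lt : ∀ (d : RT R ar) (q : List ℕ) (s : RT R ar), q ≠ [] →
    RT.subAt d q = some s → s.size < d.size
  | .node r ts, i :: p, s, _ => by
    simp only [RT.subAt]
    split
    · rename_i h
      intro hs
      have := RT.size_subAt_le (ts ⟨i, h⟩) p s hs
      have h2 : (ts ⟨i, h⟩).size ≤ ∑ j, (ts j).size :=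
        Finset.single_le_sum (f := fun j => (ts j).size) (fun j _ => Nat.zero_le _)
          (Finset.mem_univ _)
      rw [RT.size]; omega
    · intro hs; exact absurd hs (by simp)
  | _, [], _, h => absurd rfl h

lemma RT.size_replaceAt : ∀ (d : RT R ar) (p : List ℕ) (t s : RT R ar),
    RT.subAt d p = some t →
    (RT.replaceAt d p s).size + t.size = d.size + s.size
  | d, [], t, s => by
    simp [RT.subAt]; rintro rfl; simp [RT.replaceAt]; omega
  | .node r ts, i :: p, t, s => by
    simp only [RT.subAt]
    split
    · rename_i h
      intro ht
      have IH := RT.size_replaceAt (ts ⟨i, h⟩) p t s ht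
      simp only [RT.replaceAt, RT.size]
      set i' : Fin (ar r) := ⟨i, h⟩ with hi'
      have key : ∀ (f : Fin (ar r) → RT R ar),
          ∑ j, (f j).size = (f i').size + ∑ j ∈ Finset.univ.erase i', (f j).size := by
        intro f
        rw [← Finset.sum_erase_add Finset.univ _ (Finset.mem_univ i')]; omega
      rw [key (fun j => if j.1 = i then RT.replaceAt (ts j) p s else ts j), key ts]
      have heq : ∑ j ∈ Finset.univ.erase i',
            (if j.1 = i then RT.replaceAt (ts j) p s else ts j).size
          = ∑ j ∈ Finset.univ.erase i', (ts j).size := by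
        apply Finset.sum_congr rfl
        intro j hj
        have : j ≠ i' := (Finset.mem_erase.mp hj).1
        have : j.1 ≠ i := fun hji => this (Fin.ext hji)
        simp [this]
      rw [heq]
      have hif : (if (i' : Fin (ar r)).1 = i then RT.replaceAt (ts i') p s else ts i')
          = RT.replaceAt (ts i') p s := if_pos rfl
      rw [hif]
      omega
    · intro hs; exact absurd hs (by simp)

lemma RT.seqTo_length : ∀ (d : RT R ar) (q : List ℕ) (w : List R),
    RT.seqTo d q = some w → w.length = q.length + 1
  | .node r ts, [], w => by simp [RT.seqTo]; rintro rfl; simp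
  | .node r ts, i :: p, w => by
    simp only [RT.seqTo]
    split
    · rename_i h
      intro hw
      simp only [Option.map_eq_some_iff] at hw
      obtain ⟨l, hl, rfl⟩ := hw
      have := RT.seqTo_length (ts ⟨i, h⟩) p l hl
      simp [this]
    · intro hw; exact absurd hw (by simp)

lemma size_lt_of_cut {d d' : RT R ar} (h : Cut d d') : d'.size < d.size := by
  obtain ⟨w, hw, p, q, t, s, hdt, hts, hseq, rfl⟩ := h
  have hwlen : 1 < w.length := hw.1
  have hq : q ≠ [] := by
    rintro rfl
    have := RT.seqTo_length t [] w hseq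
    simp at this
    omega
  have h1 : s.size < t.size := RT.size_subAt_lt t q s hq hts
  have h2 := RT.size_replaceAt d p t s hdt
  omega

lemma not_transGen_cut_self (d : RT R ar) : ¬ Relation.TransGen Cut d d := by
  intro h
  have : ∀ a b : RT R ar, Relation.TransGen Cut a b → b.size < a.size := by
    intro a b hab
    induction hab with
    | single h => exact size_lt_of_cut h
    | tail _ h ih => exact lt_trans (size_lt_of_cut h) ih
  exact lt_irrefl _ (this d d h)

end SizeAux

/-- If `d ⊢⁺ d'`, then `cotrees d'` is a proper subset of `cotrees d`. -/
theorem cotrees_ssubset_of_cut_transGen {N R : Type} [Fintype N] [Nonempty N] [Fintype R]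
    (lhs : R → N) (rhs : R → List N)
    (d d' : RT R fun r => (rhs r).length)
    (hd : WellSorted lhs rhs d) (hd' : WellSorted lhs rhs d')
    (h : Relation.TransGen Cut d d') : cotrees d' ⊂ cotrees d := by
  constructor
  · intro x hx
    exact h.trans hx
  · intro hsub
    have hd'mem : d' ∈ cotrees d := h
    have : d' ∈ cotrees d' := hsub hd'mem
    exact not_transGen_cut_self d' this
end

section
/- Let c ∈ ℕ and let the weighted system (N,R,wt,K) be c-closed. Then for every d ∈ T_R, every c' ∈ ℕ with c' ≥ c + 1, and every elementary cycle w ∈ R* such that some leaf position p of d is (c',w)-cyclic: wt(d)_K ⊕ ⊕_{d'∈cotrees(d,w)} wt(d')_K = ⊕_{d'∈cotrees(d,w)} wt(d')_K. -/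
open scoped Classical

/-- The weighted system `(N, R, wt, K)` is `c`-closed: for every well-sorted tree `d` and
elementary cycle `w` such that some leaf position of `d` is `(c+1,w)`-cyclic, the weight
of `d` is subsumed by the (finite) `⊕`-sum of the weights of the `w`-cutout trees of `d`. -/
def CClosed {K : Type} [AddCommMonoid K] {N R : Type} (lhs : R → N) (rhs : R → List N)
    (wt : ∀ r : R, (Fin (rhs r).length → K) → K) (c : ℕ) : Prop :=
  ∀ d : RT R (fun r => (rhs r).length), WellSorted lhs rhs d →
    ∀ w : List R, ElementaryCycle w → (∃ p, LeafCW (c + 1) w d p) →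
      (wtval wt d + ∑ᶠ d' ∈ cotreesW w d, wtval wt d') = ∑ᶠ d' ∈ cotreesW w d, wtval wt d'

/-!
A `(c',w)`-cyclic path with `c' ≥ c + 1` has a `(c+1,w)`-cyclic suffix, which is the path to
the same leaf inside some subtree `t` of `d`; `c`-closedness applies to `t`. Writing `d` as a
context `C` around `t`, cutting `w`-cycles out of `t` and plugging the result into `C` gives
`w`-cutout trees of `d`, and by distributivity the weight of `C[s]` is an additive function of
the weight of `s`. Pushing the equation for `t` through `C` absorbs `wt(d)` into the part of the
sum indexed by these trees, and the remaining cutout trees of `d` are added to both sides.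
-/

namespace RT

variable {R : Type} {ar : R → ℕ}

@[simp] lemma subAt_nil (d : RT R ar) : subAt d [] = some d := by cases d; rfl

@[simp] lemma replaceAt_nil (d s : RT R ar) : replaceAt d [] s = s := by cases d; rfl

lemma subAt_cons (r : R) (ts : Fin (ar r) → RT R ar) (i : ℕ) (p : List ℕ) :
    subAt (node r ts) (i :: p) = if h : i < ar r then subAt (ts ⟨i, h⟩) p else none := rfl

lemma replaceAt_cons (r : R) (ts : Fin (ar r) → RT R ar) (i : ℕ) (p : List ℕ) (s : RT R ar) :
    replaceAt (node r ts) (i :: p) s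
      = node r fun j => if j.1 = i then replaceAt (ts j) p s else ts j := rfl

lemma subAt_append (p q : List ℕ) (d : RT R ar) :
    subAt d (p ++ q) = (subAt d p).bind fun t => subAt t q := by
  induction p generalizing d with
  | nil => simp
  | cons i p ih =>
    cases d with
    | node r ts =>
      simp only [List.cons_append, subAt_cons]
      split
      · exact ih _
      · rfl

lemma replaceAt_of_subAt {p : List ℕ} {d t : RT R ar} (h : subAt d p = some t) :
    replaceAt d p t = d := by
  induction p generalizing d with
  | nil => simp_all
  | cons i p ih =>
    cases d with
    | node r ts =>
      rw [subAt_cons] at h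
      split at h
      · next hi =>
        rw [replaceAt_cons]
        congr 1
        funext j
        split
        · next hj =>
          obtain rfl : j = ⟨i, hi⟩ := Fin.ext hj
          exact ih h
        · rfl
      · cases h

lemma subAt_replaceAt {p : List ℕ} {d : RT R ar} (hp : (subAt d p).isSome) (s : RT R ar) :
    subAt (replaceAt d p s) p = some s := by
  induction p generalizing d with
  | nil => simp
  | cons i p ih =>
    cases d with
    | node r ts =>
      rw [subAt_cons] at hp
      split at hp
      · next hi => simpa [replaceAt_cons, subAt_cons, hi] using ih hp
      · cases hp

lemma replaceAt_injective {p : List ℕ} {d : RT R ar} (hp : (subAt d p).isSome) :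
    Function.Injective (replaceAt d p) := fun s s' h =>
  Option.some_injective _ <| by rw [← subAt_replaceAt hp s, h, subAt_replaceAt hp s']

lemma replaceAt_append_replaceAt (p q : List ℕ) (d a s : RT R ar) :
    replaceAt (replaceAt d p a) (p ++ q) s = replaceAt d p (replaceAt a q s) := by
  induction p generalizing d with
  | nil => simp
  | cons i p ih =>
    cases d with
    | node r ts =>
      simp only [List.cons_append, replaceAt_cons]
      congr 1
      funext j
      split <;> simp_all

lemma exists_subAt_of_seqTo_eq_append (A : List R) {B : List R} (hB : B ≠ [])
    {p : List ℕ} {d : RT R ar} (h : seqTo d p = some (A ++ B)) :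
    ∃ p₁ p₂ t, p = p₁ ++ p₂ ∧ subAt d p₁ = some t ∧ seqTo t p₂ = some B := by
  induction A generalizing p d with
  | nil => exact ⟨[], p, d, rfl, subAt_nil d, h⟩
  | cons a A ih =>
    obtain ⟨r, ts⟩ := d
    cases p with
    | nil => simp_all [seqTo]
    | cons i p =>
      simp only [seqTo] at h
      split at h
      · next hi =>
        obtain ⟨l, hl, hlA⟩ := Option.map_eq_some_iff.mp h
        obtain rfl : l = A ++ B := (List.cons.inj hlA).2
        obtain ⟨p₁, p₂, t, rfl, ht, hseq⟩ := ih hl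
        exact ⟨i :: p₁, p₂, t, rfl, by rw [subAt_cons, dif_pos hi, ht], hseq⟩
      · cases h

lemma height_child_lt (r : R) (ts : Fin (ar r) → RT R ar) (i : Fin (ar r)) :
    height (ts i) < height (node r ts) :=
  Finset.le_sup (f := fun j => height (ts j) + 1) (Finset.mem_univ i)

lemma height_le_of_subAt {p : List ℕ} {d t : RT R ar} (h : subAt d p = some t) :
    height t ≤ height d := by
  induction p generalizing d with
  | nil => simp_all
  | cons i p ih =>
    obtain ⟨r, ts⟩ := d
    rw [subAt_cons] at h
    split at h
    · next hi => exact (ih h).trans (height_child_lt r ts ⟨i, hi⟩).le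
    · cases h

lemma height_replaceAt_le {p : List ℕ} {d t s : RT R ar} (h : subAt d p = some t)
    (hs : height s ≤ height t) : height (replaceAt d p s) ≤ height d := by
  induction p generalizing d with
  | nil => simp_all
  | cons i p ih =>
    obtain ⟨r, ts⟩ := d
    rw [subAt_cons] at h
    split at h
    · next hi =>
      refine Finset.sup_mono_fun fun j _ => ?_
      dsimp only
      split
      · next hj =>
        obtain rfl : j = ⟨i, hi⟩ := Fin.ext hj
        exact Nat.add_le_add_right (ih h) 1
      · rfl
    · cases h

theorem finite_height_lt [Finite R] (n : ℕ) : Finite {t : RT R ar // height t < n} := by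
  induction n with
  | zero => exact @Finite.of_subsingleton _ ⟨fun t => (Nat.not_lt_zero _ t.2).elim⟩
  | succ n ih =>
    let children : {t : RT R ar // height t < n + 1} → Σ r : R, Fin (ar r) → {t // height t < n}
      | ⟨node r ts, ht⟩ => ⟨r, fun i => ⟨ts i, by have := height_child_lt r ts i; omega⟩⟩
    refine Finite.of_injective children ?_
    rintro ⟨⟨r, ts⟩, _⟩ ⟨⟨r', ts'⟩, _⟩ h
    obtain ⟨rfl, h⟩ := Sigma.mk.inj_iff.mp h
    obtain rfl : ts = ts' := funext fun i => congrArg Subtype.val (congrFun (eq_of_heq h) i)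
    rfl

end RT

open RT

section Cutting

variable {R : Type} {ar : R → ℕ} {w : List R}

lemma CutW.height_le {a b : RT R ar} (h : CutW w a b) : height b ≤ height a := by
  obtain ⟨p, q, t, s, ht, hs, _, rfl⟩ := h
  exact height_replaceAt_le ht (height_le_of_subAt hs)

lemma height_le_of_mem_cotreesW {d b : RT R ar} (h : b ∈ cotreesW w d) :
    height b ≤ height d := by
  induction h with
  | single h => exact h.height_le
  | tail _ h ih => exact h.height_le.trans ih

lemma cotreesW_finite [Finite R] (w : List R) (d : RT R ar) : (cotreesW w d).Finite :=
  (Set.finite_coe_iff.mp (finite_height_lt (height d + 1))).subset fun _ hb =>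
    Nat.lt_succ_of_le (height_le_of_mem_cotreesW hb)

lemma CutW.replaceAt {p : List ℕ} {d : RT R ar} (hp : (subAt d p).isSome) {a b : RT R ar}
    (h : CutW w a b) : CutW w (replaceAt d p a) (replaceAt d p b) := by
  obtain ⟨p', q, t, s, ht, hs, hseq, rfl⟩ := h
  refine ⟨p ++ p', q, t, s, ?_, hs, hseq, (replaceAt_append_replaceAt p p' d a s).symm⟩
  rw [subAt_append, subAt_replaceAt hp]
  exact ht

lemma replaceAt_mem_cotreesW {p : List ℕ} {d t : RT R ar} (h : subAt d p = some t)
    {b : RT R ar} (hb : b ∈ cotreesW w t) : replaceAt d p b ∈ cotreesW w d := by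
  have hp : (subAt d p).isSome := by simp [h]
  have hlift := hb.lift (replaceAt d p) fun _ _ => CutW.replaceAt hp
  rw [Function.onFun, replaceAt_of_subAt h] at hlift
  exact hlift

end Cutting

lemma WellSorted.subAt {N R : Type} {lhs : R → N} {rhs : R → List N} {p : List ℕ}
    {d t : RT R fun r => (rhs r).length} (hd : WellSorted lhs rhs d)
    (h : RT.subAt d p = some t) : WellSorted lhs rhs t := by
  induction p generalizing d with
  | nil => simp_all
  | cons i p ih =>
    obtain ⟨r, ts, _, hrec⟩ := hd
    rw [subAt_cons] at h
    split at h
    · exact ih (hrec _) h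
    · cases h

section Context

variable {R K : Type} {ar : R → ℕ}

/-- `wtvalCtx wt d p k` is the weight of `d` with the subtree at `p` replaced by a tree of
weight `k`. -/
def wtvalCtx (wt : ∀ r : R, (Fin (ar r) → K) → K) : RT R ar → List ℕ → K → K
  | _, [], k => k
  | node r ts, i :: p, k =>
      if h : i < ar r then
        wt r (Function.update (fun j => wtval wt (ts j)) ⟨i, h⟩ (wtvalCtx wt (ts ⟨i, h⟩) p k))
      else k

@[simp] lemma wtvalCtx_nil (wt : ∀ r : R, (Fin (ar r) → K) → K) (d : RT R ar) (k : K) :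
    wtvalCtx wt d [] k = k := by cases d; rfl

lemma wtval_replaceAt (wt : ∀ r : R, (Fin (ar r) → K) → K) {p : List ℕ} {d : RT R ar}
    (hp : (subAt d p).isSome) (s : RT R ar) :
    wtval wt (replaceAt d p s) = wtvalCtx wt d p (wtval wt s) := by
  induction p generalizing d with
  | nil => simp
  | cons i p ih =>
    obtain ⟨r, ts⟩ := d
    rw [subAt_cons] at hp
    split at hp
    · next hi =>
      rw [replaceAt_cons, wtvalCtx, dif_pos hi, wtval]
      congr 1
      funext j
      by_cases hj : j = ⟨i, hi⟩
      · subst hj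
        simpa using ih hp
      · simp [hj, Fin.ext_iff.not.mp hj]
    · cases hp

lemma wtvalCtx_wtval_of_subAt (wt : ∀ r : R, (Fin (ar r) → K) → K) {p : List ℕ}
    {d t : RT R ar} (h : subAt d p = some t) : wtvalCtx wt d p (wtval wt t) = wtval wt d := by
  rw [← wtval_replaceAt wt (by simp [h]), replaceAt_of_subAt h]

variable [AddCommMonoid K] {Ω : ∀ n : ℕ, Set ((Fin n → K) → K)}

def wtvalCtxHom (hΩd : DistributiveOps Ω) {wt : ∀ r : R, (Fin (ar r) → K) → K}
    (hwt : ∀ r, wt r ∈ Ω (ar r)) (d : RT R ar) (p : List ℕ) (hp : (subAt d p).isSome) :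
    K →+ K where
  toFun := wtvalCtx wt d p
  map_zero' := by
    induction p generalizing d with
    | nil => simp
    | cons i p ih =>
      obtain ⟨r, ts⟩ := d
      rw [subAt_cons] at hp
      split at hp
      · next hi =>
        rw [wtvalCtx, dif_pos hi, ih _ hp]
        exact (hΩd _ _ (hwt r)).2 _ ⟨⟨i, hi⟩, by simp⟩
      · cases hp
  map_add' a b := by
    induction p generalizing d with
    | nil => simp
    | cons i p ih =>
      obtain ⟨r, ts⟩ := d
      rw [subAt_cons] at hp
      split at hp
      · next hi =>
        simp only [wtvalCtx, dif_pos hi, ih _ hp]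
        exact (hΩd _ _ (hwt r)).1 _ _ _ _
      · cases hp

end Context

lemma add_finsum_mem_eq_of_subset {α K : Type} [AddCommMonoid K] {s t : Set α} {f : α → K}
    {a : K} (hst : s ⊆ t) (ht : t.Finite) (h : a + ∑ᶠ x ∈ s, f x = ∑ᶠ x ∈ s, f x) :
    a + ∑ᶠ x ∈ t, f x = ∑ᶠ x ∈ t, f x := by
  rw [← finsum_mem_add_sdiff hst ht, ← add_assoc, h]

theorem add_finsum_cotreesW_of_subAt {R K : Type} {ar : R → ℕ} [Finite R] [AddCommMonoid K]
    {Ω : ∀ n : ℕ, Set ((Fin n → K) → K)} (hΩd : DistributiveOps Ω)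
    {wt : ∀ r : R, (Fin (ar r) → K) → K} (hwt : ∀ r, wt r ∈ Ω (ar r)) {w : List R}
    {p : List ℕ} {d t : RT R ar} (ht : subAt d p = some t)
    (h : wtval wt t + ∑ᶠ x ∈ cotreesW w t, wtval wt x = ∑ᶠ x ∈ cotreesW w t, wtval wt x) :
    wtval wt d + ∑ᶠ x ∈ cotreesW w d, wtval wt x = ∑ᶠ x ∈ cotreesW w d, wtval wt x := by
  have hp : (subAt d p).isSome := by simp [ht]
  let C := wtvalCtxHom hΩd hwt d p hp
  have himage : ∑ᶠ x ∈ replaceAt d p '' cotreesW w t, wtval wt x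
      = C (∑ᶠ x ∈ cotreesW w t, wtval wt x) := by
    rw [finsum_mem_image (replaceAt_injective hp).injOn,
      C.map_finsum_mem _ (cotreesW_finite w t)]
    exact finsum_mem_congr rfl fun x _ => wtval_replaceAt wt hp x
  have hd : wtval wt d = C (wtval wt t) := (wtvalCtx_wtval_of_subAt wt ht).symm
  refine add_finsum_mem_eq_of_subset (s := replaceAt d p '' cotreesW w t) ?_ (cotreesW_finite w d) ?_
  · rintro _ ⟨b, hb, rfl⟩
    exact replaceAt_mem_cotreesW ht hb
  · rw [himage, hd, ← map_add, h]

section Cyclic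

variable {R : Type} {ar : R → ℕ} {w : List R}

lemma ElementaryCycle.ne_nil (hw : ElementaryCycle w) : w ≠ [] :=
  List.ne_nil_of_length_pos (Nat.zero_lt_of_lt hw.1)

/-- Dropping the first `c' - (c + 1)` occurrences of `w` leaves a `(c+1,w)`-cyclic suffix. -/
lemma CWCyclic.exists_append {c c' : ℕ} {ρ : List R} (h : CWCyclic c' w ρ) (hc : c + 1 ≤ c') :
    ∃ A B, ρ = A ++ B ∧ B ≠ [] ∧ CWCyclic (c + 1) w B := by
  obtain ⟨hw, v, rfl, hv⟩ := h
  obtain ⟨m, rfl⟩ : ∃ m, c' = m + (c + 1) := ⟨c' - (c + 1), by omega⟩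
  refine ⟨v 0 ++ ((List.range m).map fun i => w ++ v (i + 1)).flatten,
    ((List.range (c + 1)).map fun i => w ++ v (m + i + 1)).flatten, ?_, ?_, ?_⟩
  · rw [List.range_add, List.map_append, List.flatten_append, List.map_map, List.append_assoc]
    rfl
  · simpa [hw.ne_nil] using ⟨0, Nat.zero_le c⟩
  · refine ⟨hw, fun j => if j = 0 then [] else v (m + j), by simp [Nat.add_assoc], ?_⟩
    rintro (_ | i) hi
    · simpa using hw.ne_nil
    · exact hv (m + (i + 1)) (by omega)

lemma LeafCW.exists_subAt {c c' : ℕ} (hc : c + 1 ≤ c') {d : RT R ar} {p : List ℕ}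
    (h : LeafCW c' w d p) : ∃ p₁ t, subAt d p₁ = some t ∧ ∃ p₂, LeafCW (c + 1) w t p₂ := by
  obtain ⟨⟨s, hs, hleaf⟩, ρ, hρ, hcyc⟩ := h
  obtain ⟨A, B, rfl, hB, hBcyc⟩ := hcyc.exists_append hc
  obtain ⟨p₁, p₂, t, rfl, ht, hseq⟩ := exists_subAt_of_seqTo_eq_append A hB hρ
  refine ⟨p₁, t, ht, p₂, ⟨s, ?_, hleaf⟩, B, hseq, hBcyc⟩
  simpa [subAt_append, ht] using hs

end Cyclic

theorem closed_for_bigger_cycle_counts_general {N R K : Type} [Fintype R]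
    [AddCommMonoid K]
    (Ω : ∀ n : ℕ, Set ((Fin n → K) → K)) (hΩd : DistributiveOps Ω)
    (lhs : R → N) (rhs : R → List N)
    (wt : ∀ r : R, (Fin (rhs r).length → K) → K) (hwt : ∀ r : R, wt r ∈ Ω (rhs r).length)
    (c : ℕ) (hclosed : CClosed lhs rhs wt c) :
    ∀ d : RT R (fun r => (rhs r).length), WellSorted lhs rhs d →
      ∀ c' : ℕ, c + 1 ≤ c' → ∀ w : List R, ElementaryCycle w → (∃ p, LeafCW c' w d p) →
        (wtval wt d + ∑ᶠ d' ∈ cotreesW w d, wtval wt d')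
          = ∑ᶠ d' ∈ cotreesW w d, wtval wt d' := by
  rintro d hd c' hc' w hw ⟨p, hp⟩
  obtain ⟨p₁, t, ht, hleaf⟩ := hp.exists_subAt hc'
  exact add_finsum_cotreesW_of_subAt hΩd hwt ht (hclosed t (hd.subAt ht) w hw hleaf)

/-- In a `c`-closed weighted system, the closedness equation extends from `(c+1,w)`-cyclic
leaves to `(c',w)`-cyclic leaves for every `c' ≥ c + 1`. -/
theorem closed_for_bigger_cycle_counts {N R K : Type} [Fintype N] [Nonempty N] [Fintype R]
    [AddCommMonoid K] (S : InfSum K) (hdc : S.DComplete)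
    (Ω : ∀ n : ℕ, Set ((Fin n → K) → K)) (hΩ0 : HasZeroOps Ω) (hΩd : DistributiveOps Ω)
    (lhs : R → N) (rhs : R → List N)
    (wt : ∀ r : R, (Fin (rhs r).length → K) → K) (hwt : ∀ r : R, wt r ∈ Ω (rhs r).length)
    (c : ℕ) (hclosed : CClosed lhs rhs wt c) :
    ∀ d : RT R (fun r => (rhs r).length), WellSorted lhs rhs d →
      ∀ c' : ℕ, c + 1 ≤ c' → ∀ w : List R, ElementaryCycle w → (∃ p, LeafCW c' w d p) →
        (wtval wt d + ∑ᶠ d' ∈ cotreesW w d, wtval wt d')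
          = ∑ᶠ d' ∈ cotreesW w d, wtval wt d' :=
  closed_for_bigger_cycle_counts_general Ω hΩd lhs rhs wt hwt c hclosed
end

section
/- Let c ∈ ℕ, let the weighted system (N,R,wt,K) be c-closed, and consider the value computation recursion (V_n, 𝒱_n). Then for every n ∈ ℕ and every nonterminal A ∈ N: V_n(A) = ⊕_{d ∈ 𝒱_n(A)} wt(d)_K (a finite ⊕-sum, since 𝒱_n(A) is finite). -/
open scoped Classical

section ValueComputation

variable {K : Type} [AddCommMonoid K] {N R : Type} [Fintype N] [Nonempty N] [Fintype R]

/-- `select e n` : the nonterminal treated in the `n`-th iteration of the inner for loop,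
given an enumeration `e` of the nonterminals. -/
def select (e : Fin (Fintype.card N) → N) (n : ℕ) : N :=
  e ⟨n % Fintype.card N, Nat.mod_lt _ Fintype.card_pos⟩

/-- The value computation recursion `V_n : N → K`. -/
noncomputable def Vrec (lhs : R → N) (rhs : R → List N)
    (wt : ∀ r : R, (Fin (rhs r).length → K) → K)
    (e : Fin (Fintype.card N) → N) : ℕ → N → K
  | 0, _ => 0
  | n + 1, A =>
      if select e n = A then
        ∑ᶠ r ∈ {r : R | lhs r = A}, wt r fun i => Vrec lhs rhs wt e n ((rhs r).get i)
      else Vrec lhs rhs wt e n A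

/-- The derivation-set recursion `𝒱_n : N → P(T_R)`. -/
noncomputable def Mrec (lhs : R → N) (rhs : R → List N) (e : Fin (Fintype.card N) → N) :
    ℕ → N → Set (RT R fun r => (rhs r).length)
  | 0, _ => ∅
  | n + 1, A =>
      if select e n = A then
        {d | ∃ (r : R) (_ : lhs r = A) (ts : Fin (rhs r).length → RT R fun r => (rhs r).length),
          d = RT.node r ts ∧ ∀ i, ts i ∈ Mrec lhs rhs e n ((rhs r).get i)}
      else Mrec lhs rhs e n A

end ValueComputation
/-!
Unfolding one step of the recursion, `V_{n+1}(A)` is a finite sum, over the rules `r` with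
left-hand side `A`, of `wt(r)` applied to the values `V_n(Aᵢ)`, which by induction are the sums of
the weights of the trees in `𝒱_n(Aᵢ)`. An operation that distributes over `⊕` in each argument and
is absorbed by `0` is `ℕ`-multilinear, so `wt(r)` turns this into the sum over all tuples in
`∏ᵢ 𝒱_n(Aᵢ)`, i.e. over the trees of `𝒱_{n+1}(A)` with root `r`.
-/

theorem MultilinearMap.map_finsum_mem_pi {S ι α M M₂ : Type*} [Semiring S] [Fintype ι]
    [DecidableEq ι] [AddCommMonoid M] [Module S M] [AddCommMonoid M₂] [Module S M₂]
    (f : MultilinearMap S (fun _ : ι => M) M₂) {s : ι → Set α} (hs : ∀ i, (s i).Finite)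
    (g : ι → α → M) :
    (f fun i => ∑ᶠ x ∈ s i, g i x) = ∑ᶠ t ∈ Set.univ.pi s, f fun i => g i (t i) := by
  have hpi : Set.univ.pi s = ↑(Fintype.piFinset fun i => (hs i).toFinset) := by
    simp [Fintype.coe_piFinset]
  simp only [finsum_mem_eq_finite_toFinset_sum _ (hs _), hpi, finsum_mem_coe_finset,
    f.map_sum_finset]

def DistributiveOps.multilinearMap {K : Type} [AddCommMonoid K]
    {Ω : ∀ n : ℕ, Set ((Fin n → K) → K)} (hΩ : DistributiveOps Ω) {k : ℕ}
    {ω : (Fin k → K) → K} (hω : ω ∈ Ω k) : MultilinearMap ℕ (fun _ : Fin k => K) K where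
  toFun := ω
  map_update_add' x i a b := by convert (hΩ k ω hω).1 x i a b
  map_update_smul' x i m a := by
    induction m with
    | zero => simpa using (hΩ k ω hω).2 _ ⟨i, by simp⟩
    | succ m ih => rw [succ_nsmul, succ_nsmul, ← ih]; convert (hΩ k ω hω).1 x i (m • a) a

namespace RT

variable {R : Type} {ar : R → ℕ}

theorem node_injective (r : R) : Function.Injective (node (ar := ar) r) := by
  intro ts ts' h
  simpa using h

theorem pairwiseDisjoint_image_node (I : Set R) (s : ∀ r, Set (Fin (ar r) → RT R ar)) :
    I.PairwiseDisjoint fun r => node r '' s r := by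
  intro r _ r' _ hne
  refine Set.disjoint_left.2 ?_
  rintro _ ⟨ts, _, rfl⟩ ⟨ts', _, h⟩
  exact hne (congrArg rootRule h).symm

end RT

section ValueComputation

variable {N R : Type} [Fintype N] [Nonempty N] (lhs : R → N) (rhs : R → List N)
  (e : Fin (Fintype.card N) → N)

theorem Mrec_succ_of_select {n : ℕ} {A : N} (h : select e n = A) :
    Mrec lhs rhs e (n + 1) A = ⋃ r ∈ {r | lhs r = A},
      RT.node r '' Set.univ.pi fun i => Mrec lhs rhs e n ((rhs r).get i) := by
  rw [Mrec, if_pos h]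
  ext d
  simp only [Set.mem_ofPred_eq, Set.mem_iUnion, Set.mem_image, Set.mem_univ_pi, exists_prop]
  constructor
  · rintro ⟨r, hr, ts, rfl, hts⟩
    exact ⟨r, hr, ts, hts, rfl⟩
  · rintro ⟨r, hr, ts, hts, rfl⟩
    exact ⟨r, hr, ts, rfl, hts⟩

theorem Mrec_succ_of_not_select {n : ℕ} {A : N} (h : select e n ≠ A) :
    Mrec lhs rhs e (n + 1) A = Mrec lhs rhs e n A := by
  rw [Mrec, if_neg h]

variable [Finite R]

theorem Mrec_finite (n : ℕ) (A : N) : (Mrec lhs rhs e n A).Finite := by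
  induction n generalizing A with
  | zero => simp [Mrec]
  | succ n ih =>
    by_cases h : select e n = A
    · rw [Mrec_succ_of_select lhs rhs e h]
      exact Set.toFinite _ |>.biUnion fun r _ => (Set.Finite.pi fun i => ih _).image _
    · rw [Mrec_succ_of_not_select lhs rhs e h]
      exact ih A

theorem finsum_mem_Mrec_succ_of_select {K : Type} [AddCommMonoid K]
    (f : RT R (fun r => (rhs r).length) → K) {n : ℕ} {A : N} (h : select e n = A) :
    ∑ᶠ d ∈ Mrec lhs rhs e (n + 1) A, f d = ∑ᶠ r ∈ {r | lhs r = A},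
      ∑ᶠ ts ∈ Set.univ.pi (fun i => Mrec lhs rhs e n ((rhs r).get i)), f (RT.node r ts) := by
  rw [Mrec_succ_of_select lhs rhs e h, finsum_mem_biUnion (RT.pairwiseDisjoint_image_node _ _)
    (Set.toFinite _) fun r _ => (Set.Finite.pi fun i => Mrec_finite lhs rhs e n _).image _]
  exact finsum_mem_congr rfl fun r _ => finsum_mem_image (RT.node_injective r).injOn

end ValueComputation

theorem Vrec_eq_sum_Mrec_general {N R K : Type} [Fintype N] [Nonempty N] [Fintype R]
    [AddCommMonoid K]
    (Ω : ∀ n : ℕ, Set ((Fin n → K) → K)) (hΩd : DistributiveOps Ω)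
    (lhs : R → N) (rhs : R → List N)
    (wt : ∀ r : R, (Fin (rhs r).length → K) → K) (hwt : ∀ r : R, wt r ∈ Ω (rhs r).length)
    (e : Fin (Fintype.card N) → N) :
    ∀ (n : ℕ) (A : N),
      Vrec lhs rhs wt e n A = ∑ᶠ d ∈ Mrec lhs rhs e n A, wtval wt d := by
  intro n
  induction n with
  | zero => simp [Vrec, Mrec]
  | succ n ih =>
    intro A
    by_cases h : select e n = A
    · calc Vrec lhs rhs wt e (n + 1) A
          = ∑ᶠ r ∈ {r | lhs r = A}, wt r fun i => ∑ᶠ d ∈ Mrec lhs rhs e n ((rhs r).get i),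
              wtval wt d := by simp only [Vrec, if_pos h, ih]
        _ = ∑ᶠ r ∈ {r | lhs r = A}, ∑ᶠ ts ∈ Set.univ.pi fun i => Mrec lhs rhs e n ((rhs r).get i),
              wt r fun i => wtval wt (ts i) :=
            finsum_mem_congr rfl fun r _ => (hΩd.multilinearMap (hwt r)).map_finsum_mem_pi
              (fun i => Mrec_finite lhs rhs e n _) _
        _ = ∑ᶠ d ∈ Mrec lhs rhs e (n + 1) A, wtval wt d :=
            (finsum_mem_Mrec_succ_of_select lhs rhs e (wtval wt) h).symm
    · rw [Vrec, if_neg h, Mrec_succ_of_not_select lhs rhs e h, ih]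

/-- In a `c`-closed weighted system, the value `V_n(A)` computed by the value computation
algorithm equals the finite `⊕`-sum of the weights of the trees in `𝒱_n(A)`. -/
theorem Vrec_eq_sum_Mrec {N R K : Type} [Fintype N] [Nonempty N] [Fintype R]
    [AddCommMonoid K]
    (S : InfSum K) (hdc : S.DComplete)
    (Ω : ∀ n : ℕ, Set ((Fin n → K) → K)) (hΩ0 : HasZeroOps Ω) (hΩd : DistributiveOps Ω)
    (lhs : R → N) (rhs : R → List N)
    (wt : ∀ r : R, (Fin (rhs r).length → K) → K) (hwt : ∀ r : R, wt r ∈ Ω (rhs r).length)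
    (c : ℕ) (hclosed : CClosed lhs rhs wt c)
    (e : Fin (Fintype.card N) → N) (he : Function.Bijective e) :
    ∀ (n : ℕ) (A : N),
      Vrec lhs rhs wt e n A = ∑ᶠ d ∈ Mrec lhs rhs e n A, wtval wt d :=
  Vrec_eq_sum_Mrec_general Ω hΩd lhs rhs wt hwt e
end
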